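/- arXiv:2305.14258 — 2 statements merged into one kernel-verified Lean document; each statement's English description precedes it below -/
import Mathlib

section
/- (Semi-supervised AUC identity.) Let p_P and p_N be probability measures on X, let π_P, π_N ∈ [0,1] with π_P + π_N = 1, and let p_U = π_P·p_P + π_N·p_N. Assume f : X → ℝ is measurable and the pushforward distributions of f under p_P and under p_N are atomless. Then the sum of the P-U risk R_PU(f) = R(f; p_P, p_U) and the U-N risk R_UN(f) = R(f; p_U, p_N) satisfies R_PU(f) + R_UN(f) − 1/2 = R_PN(f); in particular the bias is always 1/2 regardless of the class prior π_P. -/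
/-!
Writing `R(f; μ, ν)` as the `μ ⊗ ν`-measure of `{f x < f x'}` makes it bilinear in `(μ, ν)`, so
`R_PU = π_P R(f; p_P, p_P) + π_N R_PN` and `R_UN = π_P R_PN + π_N R(f; p_N, p_N)`. For an atomless
score distribution the self-risk `R(f; μ, μ)` is `1 / 2`, and `π_P + π_N = 1` gives the identity.
-/

open MeasureTheory

/-- The AUC risk of score function `f` under the 0–1 loss, with positive distribution `μ`
and negative distribution `ν`: `R(f; μ, ν) = ∫∫ 𝟙[f(x) − f(x') < 0] dμ(x) dν(x')`. -/
noncomputable def AUCRisk {X : Type*} [MeasurableSpace X] (f : X → ℝ)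
    (μ ν : Measure X) : ℝ :=
  ∫ x, ∫ x', (if f x - f x' < 0 then (1 : ℝ) else 0) ∂ν ∂μ

namespace MeasureTheory.Measure

variable {α : Type*} [MeasurableSpace α]

instance isFiniteMeasure_ofReal_smul (μ : Measure α) [IsFiniteMeasure μ] (a : ℝ) :
    IsFiniteMeasure (ENNReal.ofReal a • μ) :=
  μ.smul_finite ENNReal.ofReal_ne_top

theorem real_ofReal_smul_add {a b : ℝ} (ha : 0 ≤ a) (hb : 0 ≤ b) (μ ν : Measure α)
    [IsFiniteMeasure μ] [IsFiniteMeasure ν] (s : Set α) :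
    (ENNReal.ofReal a • μ + ENNReal.ofReal b • ν).real s = a * μ.real s + b * ν.real s := by
  rw [measureReal_add_apply, measureReal_ennreal_smul_apply, measureReal_ennreal_smul_apply,
    ENNReal.toReal_ofReal ha, ENNReal.toReal_ofReal hb]

end MeasureTheory.Measure

namespace AUCRisk

variable {X : Type*} [MeasurableSpace X] {f : X → ℝ}

theorem eq_measureReal_prod (hf : Measurable f) (μ ν : Measure X)
    [IsFiniteMeasure μ] [IsFiniteMeasure ν] :
    AUCRisk f μ ν = (μ.prod ν).real {p : X × X | f p.1 < f p.2} := by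
  have hS : MeasurableSet {p : X × X | f p.1 < f p.2} :=
    measurableSet_lt (hf.comp measurable_fst) (hf.comp measurable_snd)
  have hind : ∀ x x', (if f x - f x' < 0 then (1 : ℝ) else 0)
      = {p : X × X | f p.1 < f p.2}.indicator 1 (x, x') := fun x x' ↦ by
    simp only [sub_neg, Set.indicator_apply, Set.mem_ofPred_eq, Pi.one_apply]
  simp only [AUCRisk, hind]
  rw [← integral_prod _ ((integrable_const 1).indicator hS), integral_indicator_one hS]

theorem ofReal_smul_add_right (hf : Measurable f) {a b : ℝ} (ha : 0 ≤ a) (hb : 0 ≤ b)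
    (μ ν₁ ν₂ : Measure X) [IsFiniteMeasure μ] [IsFiniteMeasure ν₁] [IsFiniteMeasure ν₂] :
    AUCRisk f μ (ENNReal.ofReal a • ν₁ + ENNReal.ofReal b • ν₂)
      = a * AUCRisk f μ ν₁ + b * AUCRisk f μ ν₂ := by
  rw [eq_measureReal_prod hf, eq_measureReal_prod hf, eq_measureReal_prod hf, Measure.prod_add,
    Measure.prod_smul_right, Measure.prod_smul_right, Measure.real_ofReal_smul_add ha hb]

theorem ofReal_smul_add_left (hf : Measurable f) {a b : ℝ} (ha : 0 ≤ a) (hb : 0 ≤ b)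
    (μ₁ μ₂ ν : Measure X) [IsFiniteMeasure μ₁] [IsFiniteMeasure μ₂] [IsFiniteMeasure ν] :
    AUCRisk f (ENNReal.ofReal a • μ₁ + ENNReal.ofReal b • μ₂) ν
      = a * AUCRisk f μ₁ ν + b * AUCRisk f μ₂ ν := by
  rw [eq_measureReal_prod hf, eq_measureReal_prod hf, eq_measureReal_prod hf, Measure.add_prod,
    Measure.prod_smul_left, Measure.prod_smul_left, Measure.real_ofReal_smul_add ha hb]

lemma measure_ties_prod_self_eq_zero (hf : Measurable f) (μ : Measure X) [SFinite μ]
    (hμ : ∀ t : ℝ, μ {x | f x = t} = 0) :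
    (μ.prod μ) {p : X × X | f p.1 = f p.2} = 0 := by
  have hD : MeasurableSet {p : X × X | f p.1 = f p.2} :=
    measurableSet_eq_fun (hf.comp measurable_fst) (hf.comp measurable_snd)
  refine (Measure.measure_prod_null hD).2 (Filter.Eventually.of_forall fun x ↦ ?_)
  simpa only [Set.preimage_ofPred_eq, Pi.zero_apply, eq_comm (a := f x)] using hμ (f x)

/-- Swapping the two samples exchanges `f x < f x'` and `f x' < f x`, and ties are null, so
each strict order has probability `1 / 2`. -/
theorem self_eq_half (hf : Measurable f) (μ : Measure X) [IsProbabilityMeasure μ]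
    (hμ : ∀ t : ℝ, μ {x | f x = t} = 0) :
    AUCRisk f μ μ = 1 / 2 := by
  have hlt : MeasurableSet {p : X × X | f p.1 < f p.2} :=
    measurableSet_lt (hf.comp measurable_fst) (hf.comp measurable_snd)
  have heq : MeasurableSet {p : X × X | f p.1 = f p.2} :=
    measurableSet_eq_fun (hf.comp measurable_fst) (hf.comp measurable_snd)
  have hgt : (μ.prod μ).real {p : X × X | f p.2 < f p.1}
      = (μ.prod μ).real {p : X × X | f p.1 < f p.2} :=
    Measure.measurePreserving_swap.measureReal_preimage hlt.nullMeasurableSet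
  have hties : (μ.prod μ).real {p : X × X | f p.1 = f p.2} = 0 :=
    (measureReal_eq_zero_iff).2 (measure_ties_prod_self_eq_zero hf μ hμ)
  have hcompl : {p : X × X | f p.1 < f p.2}ᶜ
      = {p : X × X | f p.2 < f p.1} ∪ {p : X × X | f p.1 = f p.2} := by
    ext p
    simp only [Set.mem_compl_iff, Set.mem_ofPred_eq, Set.mem_union, not_lt]
    exact le_iff_lt_or_eq.trans (or_congr_right eq_comm)
  have hsplit : 1 - (μ.prod μ).real {p : X × X | f p.1 < f p.2}
      = (μ.prod μ).real {p : X × X | f p.2 < f p.1}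
        + (μ.prod μ).real {p : X × X | f p.1 = f p.2} := by
    rw [← probReal_compl_eq_one_sub hlt, hcompl, measureReal_union _ heq]
    exact Set.disjoint_left.2 fun p hp hp' ↦ hp.ne' hp'
  rw [eq_measureReal_prod hf]
  linarith

end AUCRisk

/-- semi-supervised AUC identity:
`R_PU(f) + R_UN(f) − 1/2 = R_PN(f)`, regardless of the class prior. -/
theorem semi_supervised_auc_identity {X : Type*} [MeasurableSpace X]
    (pP pN : Measure X) [IsProbabilityMeasure pP] [IsProbabilityMeasure pN]
    (πP πN : ℝ) (hπP : πP ∈ Set.Icc (0 : ℝ) 1) (hπN : πN ∈ Set.Icc (0 : ℝ) 1)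
    (hsum : πP + πN = 1)
    (f : X → ℝ) (hf : Measurable f)
    (hP : ∀ t : ℝ, pP {x | f x = t} = 0)
    (hN : ∀ t : ℝ, pN {x | f x = t} = 0)
    (pU : Measure X)
    (hpU : pU = ENNReal.ofReal πP • pP + ENNReal.ofReal πN • pN) :
    AUCRisk f pP pU + AUCRisk f pU pN - 1 / 2 = AUCRisk f pP pN := by
  subst hpU
  rw [AUCRisk.ofReal_smul_add_right hf hπP.1 hπN.1, AUCRisk.ofReal_smul_add_left hf hπP.1 hπN.1,
    AUCRisk.self_eq_half hf pP hP, AUCRisk.self_eq_half hf pN hN]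
  linear_combination (1 / 2 + AUCRisk f pP pN) * hsum
end

section
/- (Noisy semi-supervised AUC identity.) Let p_P and p_N be probability measures on X, let π_P, π_N ∈ [0,1] with π_P + π_N = 1, let η_P, η_N ∈ [0,1], and define p_P̃ = (1−η_P)·p_P + η_P·p_N, p_Ñ = η_N·p_P + (1−η_N)·p_N, and p_U = π_P·p_P + π_N·p_N. Assume f : X → ℝ is measurable and the pushforward distributions of f under p_P and under p_N are atomless. Then R(f; p_P̃, p_U) + R(f; p_U, p_Ñ) − 1/2 = ã·R_PN(f) + (1 − ã)/2, where ã = 1 − η_P − η_N. -/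
/-!
The AUC risk is additive and positively homogeneous in each of its two measures, so both sides
expand into the four risks `R(f; p, q)` with `p, q ∈ {p_P, p_N}`. When `q` has no atoms under `f`,
almost every pair is strictly ordered, which gives `R(f; p, q) + R(f; q, p) = 1`. Hence
`R(f; p_P, p_P) = R(f; p_N, p_N) = 1/2` and `R(f; p_N, p_P) = 1 - R_PN(f)`, and what remains is
an identity between polynomials modulo `π_P + π_N = 1`.
-/

open MeasureTheory

section
variable {X : Type*} [MeasurableSpace X] {f : X → ℝ} {μ μ₁ μ₂ ν ν₁ ν₂ : Measure X}

instance isFiniteMeasure_ofReal_smul [IsFiniteMeasure μ] (c : ℝ) :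
    IsFiniteMeasure (ENNReal.ofReal c • μ) :=
  isFiniteMeasureSMulOfNNRealTower (r := c.toNNReal)

lemma integral_ite_sub_neg_eq_measureReal (hf : Measurable f) (ν : Measure X) (x : X) :
    ∫ x', (if f x - f x' < 0 then (1 : ℝ) else 0) ∂ν = ν.real {x' | f x < f x'} := by
  simp_rw [sub_neg, ← integral_indicator_one (measurableSet_lt measurable_const hf)]
  rfl

lemma aucRisk_eq_integral_measureReal (hf : Measurable f) (μ ν : Measure X) :
    AUCRisk f μ ν = ∫ x, ν.real {x' | f x < f x'} ∂μ := by
  simp_rw [AUCRisk, integral_ite_sub_neg_eq_measureReal hf]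

lemma integrable_measureReal_lt (hf : Measurable f) [IsFiniteMeasure μ] [IsFiniteMeasure ν] :
    Integrable (fun x => ν.real {x' | f x < f x'}) μ := by
  refine .of_bound (C := ν.real .univ) ?_ (.of_forall fun x => ?_)
  · have hlt : MeasurableSet {p : X × X | f p.1 < f p.2} :=
      measurableSet_lt (hf.comp measurable_fst) (hf.comp measurable_snd)
    exact (measurable_measure_prodMk_left hlt).ennreal_toReal.aestronglyMeasurable
  · rw [Real.norm_of_nonneg measureReal_nonneg]
    exact measureReal_mono (Set.subset_univ _)

lemma aucRisk_smul_left (c : ENNReal) : AUCRisk f (c • μ) ν = c.toReal * AUCRisk f μ ν :=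
  integral_smul_measure _ c

lemma aucRisk_smul_right (c : ENNReal) : AUCRisk f μ (c • ν) = c.toReal * AUCRisk f μ ν := by
  simp_rw [AUCRisk, integral_smul_measure, smul_eq_mul, integral_const_mul]

lemma aucRisk_add_left (hf : Measurable f) [IsFiniteMeasure μ₁] [IsFiniteMeasure μ₂]
    [IsFiniteMeasure ν] : AUCRisk f (μ₁ + μ₂) ν = AUCRisk f μ₁ ν + AUCRisk f μ₂ ν := by
  simp_rw [aucRisk_eq_integral_measureReal hf]
  exact integral_add_measure (integrable_measureReal_lt hf) (integrable_measureReal_lt hf)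

lemma aucRisk_eq_aucRisk_neg (hf : Measurable f) (μ ν : Measure X) [IsFiniteMeasure μ]
    [IsFiniteMeasure ν] : AUCRisk f μ ν = AUCRisk (-f) ν μ := by
  have hint : Integrable
      (Function.uncurry fun x x' => if f x - f x' < 0 then (1 : ℝ) else 0) (μ.prod ν) := by
    refine .of_bound (C := 1) ?_ (.of_forall fun p => ?_)
    · have hneg : MeasurableSet {p : X × X | f p.1 - f p.2 < 0} :=
        measurableSet_lt ((hf.comp measurable_fst).sub (hf.comp measurable_snd)) measurable_const
      exact (Measurable.ite hneg measurable_const measurable_const).aestronglyMeasurable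
    · simp only [Function.uncurry_def]
      split_ifs <;> norm_num
  simp only [AUCRisk, integral_integral_swap hint, Pi.neg_apply, neg_sub_neg]

lemma aucRisk_add_right (hf : Measurable f) [IsFiniteMeasure μ] [IsFiniteMeasure ν₁]
    [IsFiniteMeasure ν₂] : AUCRisk f μ (ν₁ + ν₂) = AUCRisk f μ ν₁ + AUCRisk f μ ν₂ := by
  simp only [aucRisk_eq_aucRisk_neg hf μ, aucRisk_add_left hf.neg]

lemma aucRisk_mix_left (hf : Measurable f) [IsFiniteMeasure μ₁] [IsFiniteMeasure μ₂]
    [IsFiniteMeasure ν] {a b : ℝ} (ha : 0 ≤ a) (hb : 0 ≤ b) :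
    AUCRisk f (ENNReal.ofReal a • μ₁ + ENNReal.ofReal b • μ₂) ν
      = a * AUCRisk f μ₁ ν + b * AUCRisk f μ₂ ν := by
  rw [aucRisk_add_left hf, aucRisk_smul_left, aucRisk_smul_left, ENNReal.toReal_ofReal ha,
    ENNReal.toReal_ofReal hb]

lemma aucRisk_mix_right (hf : Measurable f) [IsFiniteMeasure μ] [IsFiniteMeasure ν₁]
    [IsFiniteMeasure ν₂] {a b : ℝ} (ha : 0 ≤ a) (hb : 0 ≤ b) :
    AUCRisk f μ (ENNReal.ofReal a • ν₁ + ENNReal.ofReal b • ν₂)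
      = a * AUCRisk f μ ν₁ + b * AUCRisk f μ ν₂ := by
  rw [aucRisk_add_right hf, aucRisk_smul_right, aucRisk_smul_right, ENNReal.toReal_ofReal ha,
    ENNReal.toReal_ofReal hb]

lemma measureReal_lt_add_measureReal_gt (hf : Measurable f) [IsProbabilityMeasure ν]
    (hν : ∀ t, ν {x | f x = t} = 0) (t : ℝ) :
    ν.real {x | t < f x} + ν.real {x | f x < t} = 1 := by
  have hdisj : Disjoint {x | t < f x} {x | f x < t} :=
    Set.disjoint_left.2 fun _ h₁ h₂ => lt_asymm (α := ℝ) h₁ h₂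
  have hunion : {x | t < f x} ∪ {x | f x < t} = {x | f x = t}ᶜ := by
    ext x
    simp only [Set.mem_union, Set.mem_ofPred_eq, Set.mem_compl_iff, ← ne_eq]
    exact lt_or_lt_iff_ne.trans ne_comm
  rw [← measureReal_union hdisj (measurableSet_lt hf measurable_const), hunion,
    probReal_compl_eq_one_sub (measurableSet_eq_fun hf measurable_const), measureReal_def, hν,
    ENNReal.toReal_zero, sub_zero]

lemma aucRisk_add_aucRisk_comm (hf : Measurable f) [IsProbabilityMeasure μ]
    [IsProbabilityMeasure ν] (hν : ∀ t, ν {x | f x = t} = 0) :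
    AUCRisk f μ ν + AUCRisk f ν μ = 1 := by
  rw [aucRisk_eq_aucRisk_neg hf ν, aucRisk_eq_integral_measureReal hf,
    aucRisk_eq_integral_measureReal hf.neg, ← integral_add (integrable_measureReal_lt hf)
      (integrable_measureReal_lt hf.neg)]
  simp only [Pi.neg_apply, neg_lt_neg_iff, measureReal_lt_add_measureReal_gt hf hν, integral_const,
    probReal_univ, smul_eq_mul, mul_one]

lemma aucRisk_self (hf : Measurable f) [IsProbabilityMeasure μ]
    (hμ : ∀ t, μ {x | f x = t} = 0) : AUCRisk f μ μ = 1 / 2 := by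
  linarith [aucRisk_add_aucRisk_comm (μ := μ) hf hμ]

lemma aucRisk_comm (hf : Measurable f) [IsProbabilityMeasure μ] [IsProbabilityMeasure ν]
    (hν : ∀ t, ν {x | f x = t} = 0) : AUCRisk f ν μ = 1 - AUCRisk f μ ν := by
  linarith [aucRisk_add_aucRisk_comm (μ := μ) hf hν]

end

/-- noisy semi-supervised AUC identity:
`R(f; p_P̃, p_U) + R(f; p_U, p_Ñ) − 1/2 = ã·R_PN(f) + (1 − ã)/2`
with `ã = 1 − η_P − η_N`. -/
theorem noisy_semi_supervised_auc_identity {X : Type*} [MeasurableSpace X]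
    (pP pN : Measure X) [IsProbabilityMeasure pP] [IsProbabilityMeasure pN]
    (πP πN : ℝ) (hπP : πP ∈ Set.Icc (0 : ℝ) 1) (hπN : πN ∈ Set.Icc (0 : ℝ) 1)
    (hsum : πP + πN = 1)
    (ηP ηN : ℝ) (hηP : ηP ∈ Set.Icc (0 : ℝ) 1) (hηN : ηN ∈ Set.Icc (0 : ℝ) 1)
    (f : X → ℝ) (hf : Measurable f)
    (hP : ∀ t : ℝ, pP {x | f x = t} = 0)
    (hN : ∀ t : ℝ, pN {x | f x = t} = 0)
    (pPt pNt pU : Measure X)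
    (hpPt : pPt = ENNReal.ofReal (1 - ηP) • pP + ENNReal.ofReal ηP • pN)
    (hpNt : pNt = ENNReal.ofReal ηN • pP + ENNReal.ofReal (1 - ηN) • pN)
    (hpU : pU = ENNReal.ofReal πP • pP + ENNReal.ofReal πN • pN) :
    AUCRisk f pPt pU + AUCRisk f pU pNt - 1 / 2
      = (1 - ηP - ηN) * AUCRisk f pP pN + (1 - (1 - ηP - ηN)) / 2 := by
  subst hpPt hpNt hpU
  rw [aucRisk_mix_left hf (sub_nonneg.2 hηP.2) hηP.1, aucRisk_mix_left hf hπP.1 hπN.1,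
    aucRisk_mix_right hf hπP.1 hπN.1, aucRisk_mix_right hf hπP.1 hπN.1,
    aucRisk_mix_right hf hηN.1 (sub_nonneg.2 hηN.2),
    aucRisk_mix_right hf hηN.1 (sub_nonneg.2 hηN.2),
    aucRisk_self hf hP, aucRisk_self hf hN, aucRisk_comm hf hN]
  linear_combination (1 / 2 + ηP / 2 + ηN / 2 + (1 - ηP - ηN) * AUCRisk f pP pN) * hsum
end
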